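/- arXiv:2604.10176 — 10 statements merged into one kernel-verified Lean document; each statement's English description precedes it below -/
import Mathlib

section
/- Let A be a real n×n matrix with det(I−A) ≠ 0, B a real n×p matrix, and C a real p×n matrix, defining the discrete-time linear system x_{k+1} = A x_k + B u_k, y_k = C x_k. Then there exists a symmetric positive definite matrix P such that the quadratic storage function V(x) = (1/2) xᵀ P x satisfies the ZOH-NI dissipation inequality V(A x + B u) − V(x) ≤ uᵀ (C(A x + B u) − C x) for all x ∈ ℝⁿ and all u ∈ ℝᵖ, if and only if there exists a symmetric positive definite matrix P such that Aᵀ P A − P is negative semidefinite and C = Bᵀ (I − A)⁻ᵀ P. -/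
open Matrix

private lemma hT {m k : ℕ} (M : Matrix (Fin m) (Fin k) ℝ) (v : Fin k → ℝ) (w : Fin m → ℝ) :
    v ⬝ᵥ Mᵀ *ᵥ w = (M *ᵥ v) ⬝ᵥ w := by
  rw [dotProduct_mulVec, vecMul_transpose]

private lemma hsym {n : ℕ} {P : Matrix (Fin n) (Fin n) ℝ} (hP : Pᵀ = P)
    (v w : Fin n → ℝ) : v ⬝ᵥ P *ᵥ w = w ⬝ᵥ P *ᵥ v := by
  rw [dotProduct_mulVec, ← mulVec_transpose, hP, dotProduct_comm]

private lemma key {n p : ℕ} (A : Matrix (Fin n) (Fin n) ℝ) (B : Matrix (Fin n) (Fin p) ℝ)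
    (C : Matrix (Fin p) (Fin n) ℝ) (P : Matrix (Fin n) (Fin n) ℝ) (hP : Pᵀ = P)
    (F : Matrix (Fin n) (Fin p) ℝ) (hAF : A * F + B = F) (z : Fin n → ℝ) (u : Fin p → ℝ) :
    (1 / 2) * ((A *ᵥ (z + F *ᵥ u) + B *ᵥ u) ⬝ᵥ (P *ᵥ (A *ᵥ (z + F *ᵥ u) + B *ᵥ u)))
        - (1 / 2) * ((z + F *ᵥ u) ⬝ᵥ (P *ᵥ (z + F *ᵥ u)))
        - u ⬝ᵥ (C *ᵥ (A *ᵥ (z + F *ᵥ u) + B *ᵥ u) - C *ᵥ (z + F *ᵥ u))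
    = (1 / 2) * (z ⬝ᵥ ((Aᵀ * P * A - P) *ᵥ z))
        + u ⬝ᵥ (((Fᵀ * P - C) * (A - 1)) *ᵥ z) := by
  have hx : A *ᵥ (z + F *ᵥ u) + B *ᵥ u = A *ᵥ z + F *ᵥ u := by
    rw [mulVec_add, mulVec_mulVec, add_assoc, ← add_mulVec, hAF]
  rw [hx]
  set a := A *ᵥ z with ha
  set f := F *ᵥ u with hf
  have e1 : z ⬝ᵥ ((Aᵀ * P * A - P) *ᵥ z) = a ⬝ᵥ P *ᵥ a - z ⬝ᵥ P *ᵥ z := by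
    rw [sub_mulVec, dotProduct_sub, ← mulVec_mulVec, ← mulVec_mulVec, hT, ha, mulVec_mulVec]
  have e2 : u ⬝ᵥ (((Fᵀ * P - C) * (A - 1)) *ᵥ z)
      = f ⬝ᵥ P *ᵥ a - f ⬝ᵥ P *ᵥ z - (u ⬝ᵥ C *ᵥ a - u ⬝ᵥ C *ᵥ z) := by
    rw [← mulVec_mulVec, sub_mulVec, sub_mulVec, one_mulVec, mulVec_sub, mulVec_sub,
      dotProduct_sub, dotProduct_sub, dotProduct_sub, ← mulVec_mulVec, ← mulVec_mulVec,
      hT, hT, hf, mulVec_mulVec, mulVec_mulVec]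
  rw [e1, e2]
  have s1 : a ⬝ᵥ P *ᵥ f = f ⬝ᵥ P *ᵥ a := hsym hP a f
  have s2 : z ⬝ᵥ P *ᵥ f = f ⬝ᵥ P *ᵥ z := hsym hP z f
  simp only [mulVec_add, dotProduct_add, add_dotProduct, dotProduct_sub]
  rw [s1, s2]
  ring

/-- LMI characterization of the ZOH-NI property for linear systems:
For the discrete-time linear system `x_{k+1} = A x_k + B u_k`, `y_k = C x_k` with
`det(I − A) ≠ 0`, there exists a symmetric positive definite `P` such that the quadratic
storage function `V(x) = (1/2) xᵀ P x` satisfies the ZOH-NI dissipation inequality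
`V(Ax + Bu) − V(x) ≤ uᵀ (C(Ax + Bu) − Cx)` for all `x, u`, if and only if there exists a
symmetric positive definite `P` with `Aᵀ P A − P` negative semidefinite and
`C = Bᵀ (I − A)⁻ᵀ P`. -/
theorem zohNI_lmi_characterization
    {n p : ℕ} (A : Matrix (Fin n) (Fin n) ℝ) (B : Matrix (Fin n) (Fin p) ℝ)
    (C : Matrix (Fin p) (Fin n) ℝ) (hA : (1 - A).det ≠ 0) :
    (∃ P : Matrix (Fin n) (Fin n) ℝ, P.IsSymm ∧ P.PosDef ∧
        ∀ (x : Fin n → ℝ) (u : Fin p → ℝ),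
          (1 / 2) * ((A *ᵥ x + B *ᵥ u) ⬝ᵥ (P *ᵥ (A *ᵥ x + B *ᵥ u)))
              - (1 / 2) * (x ⬝ᵥ (P *ᵥ x))
            ≤ u ⬝ᵥ (C *ᵥ (A *ᵥ x + B *ᵥ u) - C *ᵥ x))
    ↔ (∃ P : Matrix (Fin n) (Fin n) ℝ, P.IsSymm ∧ P.PosDef ∧
        (∀ v : Fin n → ℝ, v ⬝ᵥ ((Aᵀ * P * A - P) *ᵥ v) ≤ 0) ∧
        C = Bᵀ * ((1 - A)⁻¹)ᵀ * P) := by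
  have hU : IsUnit (1 - A).det := isUnit_iff_ne_zero.mpr hA
  obtain ⟨F, hFdef⟩ : ∃ F : Matrix (Fin n) (Fin p) ℝ, F = (1 - A)⁻¹ * B := ⟨_, rfl⟩
  have hInv1 : (1 - A) * (1 - A)⁻¹ = 1 := mul_nonsing_inv _ hU
  have hInv2 : (1 - A)⁻¹ * (1 - A) = 1 := nonsing_inv_mul _ hU
  have hAinv : A * (1 - A)⁻¹ = (1 - A)⁻¹ - 1 := by
    have h := hInv1
    rw [sub_mul, one_mul, sub_eq_iff_eq_add] at h
    exact eq_sub_of_add_eq (by rw [add_comm]; exact h.symm)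
  have hAF : A * F + B = F := by
    rw [hFdef, ← Matrix.mul_assoc, hAinv, Matrix.sub_mul, Matrix.one_mul, sub_add_cancel]
  have hFC : ∀ P : Matrix (Fin n) (Fin n) ℝ, Fᵀ * P = Bᵀ * ((1 - A)⁻¹)ᵀ * P := by
    intro P
    rw [hFdef, transpose_mul]
  constructor
  · rintro ⟨P, hS, hPD, hineq⟩
    have hPt : Pᵀ = P := hS
    refine ⟨P, hS, hPD, ?_, ?_⟩
    · intro v
      have h := hineq v 0
      simp only [mulVec_zero, add_zero, zero_dotProduct, sub_self] at h
      have e1 : v ⬝ᵥ ((Aᵀ * P * A - P) *ᵥ v)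
          = (A *ᵥ v) ⬝ᵥ P *ᵥ (A *ᵥ v) - v ⬝ᵥ P *ᵥ v := by
        rw [sub_mulVec, dotProduct_sub, ← mulVec_mulVec, ← mulVec_mulVec, hT, mulVec_mulVec]
      rw [e1]
      linarith
    · -- show the cross term matrix is zero
      have hzero : (Fᵀ * P - C) * (A - 1) = 0 := by
        have hq : ∀ (z : Fin n → ℝ) (u : Fin p → ℝ),
            (1 / 2) * (z ⬝ᵥ ((Aᵀ * P * A - P) *ᵥ z))
              + u ⬝ᵥ (((Fᵀ * P - C) * (A - 1)) *ᵥ z) ≤ 0 := by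
          intro z u
          rw [← key A B C P hPt F hAF z u]
          have := hineq (z + F *ᵥ u) u
          linarith
        have hlin : ∀ (z : Fin n → ℝ) (u : Fin p → ℝ),
            u ⬝ᵥ (((Fᵀ * P - C) * (A - 1)) *ᵥ z) = 0 := by
          intro z u
          by_contra hne
          set c := u ⬝ᵥ (((Fᵀ * P - C) * (A - 1)) *ᵥ z) with hc
          set s := (1 / 2) * (z ⬝ᵥ ((Aᵀ * P * A - P) *ᵥ z)) with hs
          have h2 := hq z (((1 - s) / c) • u)
          rw [smul_dotProduct, ← hc, ← hs, smul_eq_mul, div_mul_cancel₀ _ hne] at h2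
          linarith
        ext i j
        have h := hlin (Pi.single j 1) (Pi.single i 1)
        simp [dotProduct, Pi.single_apply, Finset.sum_ite_eq'] at h
        simpa [mulVec, dotProduct, Pi.single_apply] using h
      have hinv : IsUnit (A - 1).det := by
        rw [show A - 1 = -(1 - A) from (neg_sub _ _).symm, det_neg, Fintype.card_fin]
        exact (isUnit_one.neg.pow n).mul hU
      have h0 : Fᵀ * P - C = 0 := by
        have h := congrArg (fun M => M * (A - 1)⁻¹) hzero
        simp only [Matrix.zero_mul] at h
        rwa [Matrix.mul_assoc, mul_nonsing_inv _ hinv, Matrix.mul_one] at h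
      have hCe : C = Fᵀ * P := (sub_eq_zero.mp h0).symm
      rw [hCe, hFC]
  · rintro ⟨P, hS, hPD, hneg, hC⟩
    have hPt : Pᵀ = P := hS
    have hCeq : Fᵀ * P - C = 0 := by rw [hFC, hC, sub_self]
    refine ⟨P, hS, hPD, ?_⟩
    intro x u
    have hk := key A B C P hPt F hAF (x - F *ᵥ u) u
    rw [sub_add_cancel] at hk
    rw [hCeq, Matrix.zero_mul, zero_mulVec, dotProduct_zero, add_zero] at hk
    have := hneg (x - F *ᵥ u)
    linarith
end

section
/- Let ω ≥ 0 and κ > 0 be real numbers, and let x, e ∈ ℝ with x_int = x + ω·e. If x_int·e ≥ x_int²/κ (integrator mode of the bimodal HIGS), then (1/(2κ))·(x_int² − x²) ≤ e·(x_int − x). -/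
/-- Integrator-mode case of the bimodal HIGS SANI dissipation inequality. -/
theorem bimodal_integrator_mode_dissipation
    (ω κ : ℝ) (hω : 0 ≤ ω) (hκ : 0 < κ) (x e : ℝ)
    (xint : ℝ) (hxint : xint = x + ω * e)
    (hmode : xint * e ≥ xint ^ 2 / κ) :
    (1 / (2 * κ)) * (xint ^ 2 - x ^ 2) ≤ e * (xint - x) := by
  have h1 : xint ^ 2 ≤ κ * (xint * e) := (div_le_iff₀' hκ).mp hmode
  rw [div_mul_eq_mul_div, one_mul, div_le_iff₀ (by positivity)]
  subst hxint
  nlinarith [sq_nonneg (ω * e), mul_nonneg hω (sq_nonneg e), sq_nonneg (x + ω * e - κ * e), mul_pos hκ hκ]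
end

section
/- Let ω ≥ 0 and κ > 0 be real numbers. For every state x ∈ ℝ and input e ∈ ℝ, the next state x⁺ produced by the bimodal HIGS update map satisfies (1/(2κ))·((x⁺)² − x²) ≤ e·(x⁺ − x); that is, the discrete-time bimodal HIGS satisfies the SANI dissipation inequality with storage function V(x) = x²/(2κ). -/
/-- The discrete-time bimodal HIGS update map: given integrator frequency `ω`, gain `κ`,
state `x` and input `e`, with candidate integrator value `x_int = x + ω*e`, the next state
is `x_int` in integrator mode (when `x_int·e ≥ x_int²/κ`) and `κ*e` in gain mode otherwise. -/
noncomputable def bimodalUpdate (ω κ x e : ℝ) : ℝ :=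
  if (x + ω * e) * e ≥ (x + ω * e) ^ 2 / κ then x + ω * e else κ * e

/-- The bimodal HIGS satisfies the SANI dissipation inequality with
storage function `V(x) = x²/(2κ)`. -/
theorem bimodal_dissipation
    (ω κ : ℝ) (hω : 0 ≤ ω) (hκ : 0 < κ) (x e : ℝ) :
    (1 / (2 * κ)) * ((bimodalUpdate ω κ x e) ^ 2 - x ^ 2)
      ≤ e * (bimodalUpdate ω κ x e - x) := by
  unfold bimodalUpdate
  have h2κ : (0:ℝ) < 2 * κ := by linarith
  split_ifs with h
  · rw [ge_iff_le, div_le_iff₀ hκ] at h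
    rw [one_div, inv_mul_le_iff₀ h2κ]
    have hey : e * (x + ω * e) ≤ κ * e ^ 2 := by
      nlinarith [sq_nonneg (κ * e - (x + ω * e))]
    nlinarith [mul_le_mul_of_nonneg_left hey hω, sq_nonneg (ω * e)]
  · rw [one_div, inv_mul_le_iff₀ h2κ]
    nlinarith [sq_nonneg (κ * e - x)]
end

section
/- Let p be a positive integer and for each i ∈ {1,…,p} let ω_i ≥ 0 and κ_i > 0. For every state vector X ∈ ℝᵖ and input vector E ∈ ℝᵖ, let X⁺ ∈ ℝᵖ be obtained by applying, in each coordinate i, the bimodal HIGS update map with parameters ω_i, κ_i to state X_i and input E_i. Then, with K = diag(κ_1,…,κ_p), the storage function V̂(X) = (1/2)·Xᵀ K⁻¹ X satisfies V̂(X⁺) − V̂(X) ≤ Eᵀ(X⁺ − X); that is, the discrete-time bimodal multi-HIGS satisfies the SANI dissipation inequality. -/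
open Matrix

lemma quad_helper (κ x' x e : ℝ) (hκ : 0 < κ)
    (main : x' ^ 2 - x ^ 2 ≤ 2 * κ * (e * (x' - x))) :
    x' ^ 2 * κ⁻¹ / 2 - x ^ 2 * κ⁻¹ / 2 ≤ e * (x' - x) := by
  have h2κ : (0:ℝ) < 2 * κ := by positivity
  have heq : x' ^ 2 * κ⁻¹ / 2 - x ^ 2 * κ⁻¹ / 2 = (x' ^ 2 - x ^ 2) / (2 * κ) := by
    field_simp
  rw [heq, div_le_iff₀ h2κ]
  nlinarith [main]

lemma bimodal_scalar (ω κ x e : ℝ) (hω : 0 ≤ ω) (hκ : 0 < κ) :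
    (bimodalUpdate ω κ x e) ^ 2 * κ⁻¹ / 2 - x ^ 2 * κ⁻¹ / 2
      ≤ e * (bimodalUpdate ω κ x e - x) := by
  unfold bimodalUpdate
  split_ifs with h
  · -- integrator mode
    set y := x + ω * e with hy
    have hcond : y ^ 2 ≤ κ * (y * e) := by
      rw [ge_iff_le, div_le_iff₀ hκ] at h
      nlinarith [h]
    have hey : 0 ≤ e * y := by nlinarith [sq_nonneg y, hcond, hκ]
    have hkey : e * y ≤ κ * e ^ 2 := by
      rcases eq_or_ne y 0 with h0 | h0
      · rw [h0, mul_zero]; positivity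
      · have hy2 : 0 < y ^ 2 := by positivity
        have hp : 0 ≤ (κ * e ^ 2 - e * y) * y ^ 2 := by nlinarith [hcond, hey]
        nlinarith [hp, hy2]
    apply quad_helper _ _ _ _ hκ
    have hx : x = y - ω * e := by rw [hy]; ring
    rw [hx]
    nlinarith [mul_nonneg hω (sub_nonneg.mpr hkey), mul_nonneg hω (mul_nonneg hω (sq_nonneg e))]
  · -- gain mode
    apply quad_helper _ _ _ _ hκ
    nlinarith [sq_nonneg (κ * e - x)]

/-- The bimodal multi-HIGS, applying the bimodal HIGS update with parameters
`ω_i ≥ 0`, `κ_i > 0` independently in each of the `p` channels, satisfies the SANI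
dissipation inequality with storage function `V̂(X) = (1/2)·Xᵀ K⁻¹ X`, `K = diag(κ_1,…,κ_p)`. -/
theorem bimodal_multiHIGS_dissipation
    {p : ℕ} (hp : 0 < p) (ω κ : Fin p → ℝ) (hω : ∀ i, 0 ≤ ω i) (hκ : ∀ i, 0 < κ i)
    (X E : Fin p → ℝ) (Xplus : Fin p → ℝ)
    (hXplus : ∀ i, Xplus i = bimodalUpdate (ω i) (κ i) (X i) (E i)) :
    (1 / 2) * (Xplus ⬝ᵥ ((Matrix.diagonal κ)⁻¹ *ᵥ Xplus))
        - (1 / 2) * (X ⬝ᵥ ((Matrix.diagonal κ)⁻¹ *ᵥ X))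
      ≤ E ⬝ᵥ (Xplus - X) := by
  have hdiag : (Matrix.diagonal κ)⁻¹ = Matrix.diagonal (fun i => (κ i)⁻¹) := by
    apply Matrix.inv_eq_right_inv
    rw [Matrix.diagonal_mul_diagonal]
    convert Matrix.diagonal_one
    exact mul_inv_cancel₀ (ne_of_gt (hκ _))
  rw [hdiag]
  simp only [dotProduct, Matrix.mulVec_diagonal, Pi.sub_apply]
  rw [Finset.mul_sum, Finset.mul_sum, ← Finset.sum_sub_distrib]
  apply Finset.sum_le_sum
  intro i _
  have := bimodal_scalar (ω i) (κ i) (X i) (E i) (hω i) (hκ i)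
  rw [← hXplus i] at this
  nlinarith [this]
end

section
/- Let ω ≥ 0 and κ > 0 be real numbers, and let x, e ∈ ℝ with x_int = x + ω·e. If x_int·e < 0, or if e = 0 and x_int ≠ 0 (zeroing mode of the trimodal HIGS), then (1/(2κ))·x² ≥ e·x; equivalently, the zeroing-mode update x⁺ = 0 satisfies the SANI dissipation inequality (1/(2κ))·((x⁺)² − x²) ≤ e·(x⁺ − x). -/
/-- Zeroing-mode case of the trimodal HIGS SANI dissipation inequality.
If `x_int·e < 0`, or `e = 0` and `x_int ≠ 0`, then `x²/(2κ) ≥ e·x`; equivalently, the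
zeroing-mode update `x⁺ = 0` satisfies the SANI dissipation inequality. -/
theorem trimodal_zeroing_mode_dissipation
    (ω κ : ℝ) (hω : 0 ≤ ω) (hκ : 0 < κ) (x e : ℝ)
    (xint : ℝ) (hxint : xint = x + ω * e)
    (hmode : xint * e < 0 ∨ (e = 0 ∧ xint ≠ 0)) :
    (1 / (2 * κ)) * x ^ 2 ≥ e * x ∧
    (1 / (2 * κ)) * ((0 : ℝ) ^ 2 - x ^ 2) ≤ e * (0 - x) := by
  have key : e * x ≤ (1 / (2 * κ)) * x ^ 2 := by
    have hx2 : 0 ≤ (1 / (2 * κ)) * x ^ 2 := by positivity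
    rcases hmode with h | ⟨he, _⟩
    · have hex : e * x < 0 := by subst hxint; nlinarith [mul_nonneg hω (sq_nonneg e)]
      linarith
    · simp [he]; positivity
  constructor
  · exact key
  · have : (1 / (2 * κ)) * ((0 : ℝ) ^ 2 - x ^ 2) = -((1 / (2 * κ)) * x ^ 2) := by ring
    rw [this]
    have : e * (0 - x) = -(e * x) := by ring
    rw [this]
    linarith
end

section
/- Let ω ≥ 0 and κ > 0 be real numbers. For every state x ∈ ℝ and input e ∈ ℝ, the next state x⁺ produced by the trimodal HIGS update map (by whichever of the three modes applies) satisfies (1/(2κ))·((x⁺)² − x²) ≤ e·(x⁺ − x); that is, the discrete-time trimodal HIGS satisfies the SANI dissipation inequality with storage function V(x) = x²/(2κ). -/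
/-- The discrete-time trimodal HIGS update map: with candidate integrator value
`x_int = x + ω*e`, the next state is `x_int` in integrator mode (`x_int·e ≥ x_int²/κ`),
`κ*e` in gain mode (`x_int·e > κ·e²`), and `0` in zeroing mode
(`x_int·e < 0`, or `e = 0` and `x_int ≠ 0`); these three regions cover all of ℝ². -/
noncomputable def trimodalUpdate (ω κ x e : ℝ) : ℝ :=
  if (x + ω * e) * e ≥ (x + ω * e) ^ 2 / κ then x + ω * e
  else if (x + ω * e) * e > κ * e ^ 2 then κ * e
  else 0

/-- The trimodal HIGS satisfies the SANI dissipation inequality with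
storage function `V(x) = x²/(2κ)`. -/
theorem trimodal_dissipation
    (ω κ : ℝ) (hω : 0 ≤ ω) (hκ : 0 < κ) (x e : ℝ) :
    (1 / (2 * κ)) * ((trimodalUpdate ω κ x e) ^ 2 - x ^ 2)
      ≤ e * (trimodalUpdate ω κ x e - x) := by
  have h2κ : (0:ℝ) < 2 * κ := by linarith
  unfold trimodalUpdate
  split_ifs with h1 h2
  · -- integrator mode
    rw [ge_iff_le, div_le_iff₀ hκ] at h1
    have key : e * (x + ω * e) ≤ κ * e ^ 2 := by
      by_contra hc
      push_neg at hc
      have hp : 0 < e * (x + ω * e) := lt_of_le_of_lt (by positivity) hc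
      nlinarith [mul_le_mul_of_nonneg_left h1 hp.le,
        mul_lt_mul_of_pos_right hc (mul_pos hp hp), sq_nonneg e]
    rw [one_div, inv_mul_le_iff₀ h2κ]
    nlinarith [mul_nonneg hω (sub_nonneg.mpr key), sq_nonneg (ω * e)]
  · rw [one_div, inv_mul_le_iff₀ h2κ]
    nlinarith [sq_nonneg (κ * e - x)]
  · -- zeroing mode
    push_neg at h1 h2
    rw [lt_div_iff₀ hκ] at h1
    have hex : e * (x + ω * e) ≤ 0 := by
      by_contra hc
      push_neg at hc
      nlinarith [mul_lt_mul_of_pos_right h1 hc,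
        mul_le_mul_of_nonneg_right h2 (sq_nonneg (x + ω * e))]
    rw [one_div, inv_mul_le_iff₀ h2κ]
    nlinarith [sq_nonneg x, mul_nonneg hκ.le (neg_nonneg.mpr hex),
      mul_nonneg (mul_nonneg hκ.le hω) (sq_nonneg e)]
end

section
/- Let p be a positive integer and for each i ∈ {1,…,p} let ω_i ≥ 0 and κ_i > 0. For every state vector X ∈ ℝᵖ and input vector E ∈ ℝᵖ, let X⁺ ∈ ℝᵖ be obtained by applying, in each coordinate i, the trimodal HIGS update map with parameters ω_i, κ_i to state X_i and input E_i. Then, with K = diag(κ_1,…,κ_p), the storage function V̂(X) = (1/2)·Xᵀ K⁻¹ X satisfies V̂(X⁺) − V̂(X) ≤ Eᵀ(X⁺ − X); that is, the discrete-time trimodal multi-HIGS satisfies the SANI dissipation inequality. -/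
open Matrix

private lemma half_div_le {κ a b c : ℝ} (hκ : 0 < κ) (key : a ^ 2 - b ^ 2 ≤ 2 * κ * c) :
    (1 / 2) * (a * (κ⁻¹ * a)) - (1 / 2) * (b * (κ⁻¹ * b)) ≤ c := by
  have h : (1 / 2) * (a * (κ⁻¹ * a)) - (1 / 2) * (b * (κ⁻¹ * b))
      = (a ^ 2 - b ^ 2) / (2 * κ) := by
    field_simp
  rw [h, div_le_iff₀ (by positivity)]
  linarith

private lemma channel (ω κ x e : ℝ) (hω : 0 ≤ ω) (hκ : 0 < κ) :
    (1 / 2) * (trimodalUpdate ω κ x e * (κ⁻¹ * trimodalUpdate ω κ x e))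
      - (1 / 2) * (x * (κ⁻¹ * x)) ≤ e * (trimodalUpdate ω κ x e - x) := by
  unfold trimodalUpdate
  split_ifs with h1 h2
  · -- integrator mode
    rw [ge_iff_le, div_le_iff₀ hκ] at h1
    apply half_div_le hκ
    have hte : (x + ω * e) * e ≤ κ * e ^ 2 := by
      nlinarith [sq_nonneg (x + ω * e - κ * e), hκ]
    nlinarith [mul_le_mul_of_nonneg_left hte (by positivity : (0:ℝ) ≤ 2 * ω), sq_nonneg (ω * e)]
  · -- gain mode
    apply half_div_le hκ
    nlinarith [sq_nonneg (κ * e - x)]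
  · -- zeroing mode
    push_neg at h1 h2
    rw [lt_div_iff₀ hκ] at h1
    apply half_div_le hκ
    have hez : e * (x + ω * e) ≤ 0 := by
      by_contra h
      push_neg at h
      nlinarith [h1, h2, h]
    nlinarith [mul_nonneg hω (sq_nonneg e)]

/-- The trimodal multi-HIGS, applying the trimodal HIGS update with parameters
`ω_i ≥ 0`, `κ_i > 0` independently in each of the `p` channels, satisfies the SANI
dissipation inequality with storage function `V̂(X) = (1/2)·Xᵀ K⁻¹ X`, `K = diag(κ_1,…,κ_p)`. -/
theorem trimodal_multiHIGS_dissipation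
    {p : ℕ} (hp : 0 < p) (ω κ : Fin p → ℝ) (hω : ∀ i, 0 ≤ ω i) (hκ : ∀ i, 0 < κ i)
    (X E : Fin p → ℝ) (Xplus : Fin p → ℝ)
    (hXplus : ∀ i, Xplus i = trimodalUpdate (ω i) (κ i) (X i) (E i)) :
    (1 / 2) * (Xplus ⬝ᵥ ((Matrix.diagonal κ)⁻¹ *ᵥ Xplus))
        - (1 / 2) * (X ⬝ᵥ ((Matrix.diagonal κ)⁻¹ *ᵥ X))
      ≤ E ⬝ᵥ (Xplus - X) := by
  have hinv : (Matrix.diagonal κ)⁻¹ = Matrix.diagonal (fun i => (κ i)⁻¹) := by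
    apply Matrix.inv_eq_right_inv
    rw [Matrix.diagonal_mul_diagonal,
      show (fun i => κ i * (κ i)⁻¹) = fun _ => (1 : ℝ) from
        funext fun i => mul_inv_cancel₀ (hκ i).ne', Matrix.diagonal_one]
  rw [hinv]
  unfold dotProduct
  simp only [Matrix.mulVec_diagonal, Pi.sub_apply, Finset.mul_sum, ← Finset.sum_sub_distrib]
  apply Finset.sum_le_sum
  intro i _
  rw [hXplus i]
  exact channel (ω i) (κ i) (X i) (E i) (hω i) (hκ i)
end

section
/- Let ω and κ be real numbers with 0 < ω ≤ κ, and let x, e ∈ ℝ with x_int = x + ω·e. Suppose x_int·e ≥ x_int²/κ (integrator mode of the bimodal HIGS) and the dissipation inequality holds with equality: (1/(2κ))·(x_int² − x²) = e·(x_int − x). Then e = 0 and x = 0 (and hence x_int = 0). -/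
/-- In the integrator mode of the bimodal HIGS with `0 < ω ≤ κ`, losslessness
(the dissipation inequality holding with equality) forces `e = 0` and `x = 0`
(and hence `x_int = 0`). -/
theorem bimodal_integrator_mode_lossless
    (ω κ : ℝ) (hω : 0 < ω) (hωκ : ω ≤ κ) (x e : ℝ)
    (xint : ℝ) (hxint : xint = x + ω * e)
    (hmode : xint * e ≥ xint ^ 2 / κ)
    (heq : (1 / (2 * κ)) * (xint ^ 2 - x ^ 2) = e * (xint - x)) :
    e = 0 ∧ x = 0 ∧ xint = 0 := by
  have hκ : 0 < κ := lt_of_lt_of_le hω hωκ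
  have h1 : xint ^ 2 ≤ xint * e * κ := by
    rw [ge_iff_le, div_le_iff₀ hκ] at hmode; linarith
  have heq' : xint ^ 2 - x ^ 2 = 2 * κ * (e * (xint - x)) := by
    field_simp at heq; linarith
  subst hxint
  have h2 : 2 * (x * e) + ω * e ^ 2 = 2 * κ * e ^ 2 := by
    have h : ω * (2 * (x * e) + ω * e ^ 2) = ω * (2 * κ * e ^ 2) := by
      linear_combination heq'
    exact mul_left_cancel₀ hω.ne' h
  have h3 : (x + ω * e) * e = κ * e ^ 2 + ω / 2 * e ^ 2 := by linarith [h2]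
  have h4 : ((x + ω * e) * e) ^ 2 = (κ * e ^ 2 + ω / 2 * e ^ 2) ^ 2 := by rw [h3]
  have hstep : (κ + ω / 2) * (ω / 2) * e ^ 4 ≤ 0 := by
    nlinarith [mul_le_mul_of_nonneg_right h1 (sq_nonneg e), h4]
  have hpos : 0 < (κ + ω / 2) * (ω / 2) := by positivity
  have he4 : e ^ 4 ≤ 0 := by
    by_contra h
    push_neg at h
    nlinarith [mul_pos hpos h]
  have he40 : e ^ 4 = 0 := le_antisymm he4 (by positivity)
  have he : e = 0 := by
    exact pow_eq_zero_iff (by norm_num : (4:ℕ) ≠ 0) |>.mp he40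
  subst he
  have hx : x = 0 := by nlinarith [sq_nonneg x]
  simp [hx]
end

section
/- Let ω > 0 and κ > 0 be real numbers, and let x, e ∈ ℝ with x_int = x + ω·e. Suppose the zeroing mode of the trimodal HIGS is active, i.e., x_int·e < 0, or e = 0 and x_int ≠ 0. Then the dissipation inequality is strict: (1/(2κ))·x² > e·x. In particular, the zeroing-mode update x⁺ = 0 can never be lossless: (1/(2κ))·((x⁺)² − x²) < e·(x⁺ − x). -/
/-- In the zeroing mode of the trimodal HIGS (with `ω > 0`, `κ > 0`), the
dissipation inequality is strict: `x²/(2κ) > e·x`; in particular, the zeroing-mode update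
`x⁺ = 0` can never be lossless. -/
theorem trimodal_zeroing_mode_strict
    (ω κ : ℝ) (hω : 0 < ω) (hκ : 0 < κ) (x e : ℝ)
    (xint : ℝ) (hxint : xint = x + ω * e)
    (hmode : xint * e < 0 ∨ (e = 0 ∧ xint ≠ 0)) :
    (1 / (2 * κ)) * x ^ 2 > e * x ∧
    (1 / (2 * κ)) * ((0 : ℝ) ^ 2 - x ^ 2) < e * (0 - x) := by
  have h : (1 / (2 * κ)) * x ^ 2 > e * x := by
    subst hxint; rcases hmode with h | ⟨he, hx⟩
    · have hsq : 0 < e ^ 2 := by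
        rcases eq_or_ne e 0 with rfl | hne
        · simp at h
        · positivity
      have hex : e * x < 0 := by nlinarith [h, mul_pos hω hsq, sq_nonneg e]
      have : 0 ≤ (1 / (2 * κ)) * x ^ 2 := by positivity
      linarith
    · subst he
      have hx' : x ≠ 0 := by simpa using hx
      have : 0 < (1 / (2 * κ)) * x ^ 2 := by positivity
      simpa using this
  exact ⟨h, by nlinarith [h]⟩
end

section
/- Let A be a real n×n matrix with det(I−A) ≠ 0, B a real n×p matrix, and C a real p×n matrix, such that (A,B,C) is a minimal realization: (A,B) is controllable (for any v ∈ ℝⁿ, if Bᵀ (Aᵀ)^k v = 0 for all k ∈ ℕ then v = 0) and (A,C) is observable (for any v ∈ ℝⁿ, if C A^k v = 0 for all k ∈ ℕ then v = 0). Suppose there exists a symmetric positive definite matrix P with Aᵀ P A − P negative semidefinite and C = Bᵀ (I − A)⁻ᵀ P. Let ω_i, κ_i be real numbers with 0 < ω_i ≤ κ_i for i = 1,…,p, set K = diag(κ_1,…,κ_p), and suppose vᵀ (K⁻¹ − C (I − A)⁻¹ B) v > 0 for all nonzero v ∈ ℝᵖ. Consider any closed-loop trajectory, i.e., sequences x :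 ℕ → ℝⁿ and X̃ : ℕ → ℝᵖ such that for all k and each i, X̃_{k+1}(i) is the trimodal HIGS update with parameters ω_i, κ_i of state X̃_k(i) and input (C x_k)(i), and x_{k+1} = A x_k + B X̃_{k+1}. Then the closed-loop system is asymptotically stable: the origin (x, X̃) = (0, 0) is Lyapunov stable, and every closed-loop trajectory satisfies x_k → 0 and X̃_k → 0 as k → ∞. -/
open Matrix Filter
open Topology

/-- A closed-loop trajectory of the positive-feedback interconnection of the linear plant
`x_{k+1} = A x_k + B u_k`, `y_k = C x_k` with a trimodal multi-HIGS with parameters `ω, κ`: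
the controller input is the plant output (`E_k = C x_k`), the controller updates each
channel by the trimodal HIGS update, and the plant input is the controller output
(`u_k = X̃_{k+1}`). -/
def IsTrimodalClosedLoopTrajectory {n p : ℕ}
    (A : Matrix (Fin n) (Fin n) ℝ) (B : Matrix (Fin n) (Fin p) ℝ)
    (C : Matrix (Fin p) (Fin n) ℝ) (ω κ : Fin p → ℝ)
    (x : ℕ → Fin n → ℝ) (Xt : ℕ → Fin p → ℝ) : Prop :=
  ∀ k : ℕ,
    (∀ i : Fin p, Xt (k + 1) i = trimodalUpdate (ω i) (κ i) (Xt k i) ((C *ᵥ x k) i)) ∧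
    x (k + 1) = A *ᵥ x k + B *ᵥ Xt (k + 1)

section HelpersTMH

variable {n p : ℕ}

lemma tmh_higs_key (ω κ ξ e : ℝ) (hω : 0 < ω) (hωκ : ω ≤ κ) :
    0 ≤ (trimodalUpdate ω κ ξ e - ξ) * (κ * e - trimodalUpdate ω κ ξ e) ∧
    0 ≤ trimodalUpdate ω κ ξ e * (κ * e - trimodalUpdate ω κ ξ e) ∧
    (trimodalUpdate ω κ ξ e = κ * e ∨
      ω ^ 2 * e ^ 2 ≤ 2 * κ * (trimodalUpdate ω κ ξ e - ξ) * e
        - ((trimodalUpdate ω κ ξ e) ^ 2 - ξ ^ 2)) := by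
  have hκ : 0 < κ := lt_of_lt_of_le hω hωκ
  unfold trimodalUpdate
  split_ifs with h1 h2
  · have h1' : (ξ + ω * e) ^ 2 ≤ κ * ((ξ + ω * e) * e) := by
      rw [ge_iff_le, div_le_iff₀ hκ] at h1; linarith
    have key : (ξ + ω * e) * e ≤ κ * e ^ 2 := by
      nlinarith [sq_nonneg (κ * e - (ξ + ω * e)), hκ]
    refine ⟨?_, ?_, Or.inr ?_⟩ <;> nlinarith [h1', key, hκ, hω]
  · refine ⟨by ring_nf; nlinarith [le_refl (0:ℝ)], by ring_nf; nlinarith [le_refl (0:ℝ)], Or.inl rfl⟩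
  · push_neg at h1 h2
    have h1' : κ * ((ξ + ω * e) * e) < (ξ + ω * e) ^ 2 := by
      rw [lt_div_iff₀ hκ] at h1; linarith
    rcases eq_or_ne e 0 with he | he
    · subst he
      refine ⟨by norm_num, by norm_num, Or.inr ?_⟩
      nlinarith [sq_nonneg ξ]
    · have hte : (ξ + ω * e) * e < 0 := by
        by_contra hge
        push_neg at hge
        have ht0 : ξ + ω * e ≠ 0 := by
          intro h0
          rw [h0] at h1'
          simp at h1'
        have htep : 0 < (ξ + ω * e) * e := lt_of_le_of_ne hge (Ne.symm (mul_ne_zero ht0 he))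
        nlinarith [mul_lt_mul_of_pos_right h1' htep,
          mul_le_mul_of_nonneg_left h2 (sq_nonneg (ξ + ω * e))]
      have hxe : ξ * e < -(ω * e ^ 2) := by nlinarith
      have he2 : 0 < e ^ 2 := by positivity
      refine ⟨?_, by norm_num, Or.inr ?_⟩
      · have : ξ * e ≤ 0 := by nlinarith
        nlinarith [this, hκ]
      · nlinarith [sq_nonneg ξ, mul_le_mul_of_nonneg_left (le_of_lt hxe) (le_of_lt hκ), hω, hωκ, he2]

lemma tmh_dot_symm (P : Matrix (Fin n) (Fin n) ℝ) (hP : Pᵀ = P) (v w : Fin n → ℝ) :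
    v ⬝ᵥ (P *ᵥ w) = w ⬝ᵥ (P *ᵥ v) := by
  rw [dotProduct_mulVec, ← mulVec_transpose, hP, dotProduct_comm]

lemma tmh_dot_transpose {m k : ℕ} (F : Matrix (Fin m) (Fin k) ℝ) (u : Fin k → ℝ) (w : Fin m → ℝ) :
    u ⬝ᵥ (Fᵀ *ᵥ w) = (F *ᵥ u) ⬝ᵥ w := by
  rw [dotProduct_mulVec, vecMul_transpose]

lemma tmh_quad_expand (P : Matrix (Fin n) (Fin n) ℝ) (hP : Pᵀ = P) (a δ f : Fin n → ℝ) :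
    (a + f) ⬝ᵥ (P *ᵥ (a + f)) - (δ + f) ⬝ᵥ (P *ᵥ (δ + f))
      - 2 * (f ⬝ᵥ (P *ᵥ (a + f))) + 2 * (f ⬝ᵥ (P *ᵥ (δ + f)))
      = a ⬝ᵥ (P *ᵥ a) - δ ⬝ᵥ (P *ᵥ δ) := by
  have h1 := tmh_dot_symm P hP a f
  have h2 := tmh_dot_symm P hP δ f
  simp only [mulVec_add, dotProduct_add, add_dotProduct]
  linarith

/-- The Lyapunov function. -/
noncomputable def WLyap (P : Matrix (Fin n) (Fin n) ℝ) (C : Matrix (Fin p) (Fin n) ℝ)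
    (κ : Fin p → ℝ) (xv : Fin n → ℝ) (ξ : Fin p → ℝ) : ℝ :=
  xv ⬝ᵥ (P *ᵥ xv) - 2 * (ξ ⬝ᵥ (C *ᵥ xv)) + ∑ i, (ξ i) ^ 2 / κ i

/-- Per-channel dissipation term. -/
def DDiss (κ : Fin p → ℝ) (ξ u e : Fin p → ℝ) (i : Fin p) : ℝ :=
  2 * κ i * (u i - ξ i) * e i - ((u i) ^ 2 - (ξ i) ^ 2)

lemma tmh_mulVec_bound (M : Matrix (Fin p) (Fin n) ℝ) :
    ∃ L : ℝ, 0 ≤ L ∧ ∀ v : Fin n → ℝ, ‖M *ᵥ v‖ ≤ L * ‖v‖ := by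
  let T' := LinearMap.toContinuousLinearMap M.mulVecLin
  exact ⟨‖T'‖, norm_nonneg _, fun v => T'.le_opNorm v⟩

lemma tmh_mulVec_continuous (M : Matrix (Fin p) (Fin n) ℝ) :
    Continuous fun v : Fin n → ℝ => M *ᵥ v :=
  (LinearMap.toContinuousLinearMap M.mulVecLin).continuous

lemma tmh_dotProduct_continuous {E : Type*} [TopologicalSpace E]
    (f g : E → (Fin n → ℝ)) (hf : Continuous f) (hg : Continuous g) :
    Continuous fun q : E => (f q) ⬝ᵥ (g q) := by
  simp only [dotProduct]
  exact continuous_finset_sum _ fun i _ =>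
    (((continuous_apply i).comp hf).mul ((continuous_apply i).comp hg))

lemma tmh_quad_bounds {E : Type*} [NormedAddCommGroup E] [NormedSpace ℝ E] [ProperSpace E]
    (g : E → ℝ) (hg : Continuous g) (hhom : ∀ (t : ℝ) (v : E), g (t • v) = t ^ 2 * g v)
    (hpos : ∀ v : E, v ≠ 0 → 0 < g v) :
    ∃ c > (0:ℝ), ∃ Cb > (0:ℝ), ∀ v : E, c * ‖v‖ ^ 2 ≤ g v ∧ g v ≤ Cb * ‖v‖ ^ 2 := by
  have hg0 : g 0 = 0 := by
    have := hhom 0 0; simpa using this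
  by_cases hE : ∃ v : E, v ≠ 0
  · obtain ⟨v₀, hv₀⟩ := hE
    have hsph : (Metric.sphere (0:E) 1).Nonempty := by
      refine ⟨‖v₀‖⁻¹ • v₀, ?_⟩
      simp [norm_smul, abs_of_nonneg (inv_nonneg.mpr (norm_nonneg v₀)),
        inv_mul_cancel₀ (norm_ne_zero_iff.mpr hv₀)]
    have hcomp : IsCompact (Metric.sphere (0:E) 1) := isCompact_sphere 0 1
    obtain ⟨vmin, hvmin, hmin⟩ := hcomp.exists_isMinOn hsph hg.continuousOn
    obtain ⟨vmax, hvmax, hmax⟩ := hcomp.exists_isMaxOn hsph hg.continuousOn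
    have hvmin1 : ‖vmin‖ = 1 := by simpa using hvmin
    have hc : 0 < g vmin := hpos vmin (by intro h; rw [h] at hvmin1; simp at hvmin1)
    have hCb : 0 < g vmax := lt_of_lt_of_le hc (hmin hvmax)
    refine ⟨g vmin, hc, g vmax, hCb, fun v => ?_⟩
    rcases eq_or_ne v 0 with rfl | hv
    · simp [hg0]
    · have hnv : (0:ℝ) < ‖v‖ := norm_pos_iff.mpr hv
      set u : E := ‖v‖⁻¹ • v with hu
      have hu1 : u ∈ Metric.sphere (0:E) 1 := by
        simp [hu, norm_smul, abs_of_nonneg (inv_nonneg.mpr (norm_nonneg v)),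
          inv_mul_cancel₀ (ne_of_gt hnv)]
      have hvu : v = ‖v‖ • u := by
        rw [hu, smul_smul, mul_inv_cancel₀ (ne_of_gt hnv), one_smul]
      have hgv : g v = ‖v‖ ^ 2 * g u := by
        calc g v = g (‖v‖ • u) := by rw [← hvu]
        _ = ‖v‖ ^ 2 * g u := hhom _ _
      have hmin' : g vmin ≤ g u := hmin hu1
      have hmax' : g u ≤ g vmax := hmax hu1
      constructor
      · rw [hgv]; nlinarith [sq_nonneg ‖v‖, hmin', hnv]
      · rw [hgv]; nlinarith [sq_nonneg ‖v‖, hmax', hnv]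
  · push_neg at hE
    refine ⟨1, one_pos, 1, one_pos, fun v => ?_⟩
    rw [hE v]
    simp [hg0]

lemma tmh_step_lemma (A : Matrix (Fin n) (Fin n) ℝ) (B : Matrix (Fin n) (Fin p) ℝ)
    (C : Matrix (Fin p) (Fin n) ℝ) (P : Matrix (Fin n) (Fin n) ℝ)
    (F : Matrix (Fin n) (Fin p) ℝ)
    (hPsymm : Pᵀ = P) (hSF : (1 - A) * F = B) (hC : C = Fᵀ * P)
    (hPsemi : ∀ v : Fin n → ℝ, v ⬝ᵥ ((Aᵀ * P * A - P) *ᵥ v) ≤ 0)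
    (κ : Fin p → ℝ) (hκ : ∀ i, 0 < κ i)
    (xk xk1 : Fin n → ℝ) (ξ u : Fin p → ℝ) (hdyn : xk1 = A *ᵥ xk + B *ᵥ u) :
    WLyap P C κ xk1 u - WLyap P C κ xk ξ + ∑ i, DDiss κ ξ u (C *ᵥ xk) i / κ i ≤ 0 := by
  have hCdot : ∀ (v : Fin p → ℝ) (w : Fin n → ℝ), v ⬝ᵥ (C *ᵥ w) = (F *ᵥ v) ⬝ᵥ (P *ᵥ w) := by
    intro v w; rw [hC, ← mulVec_mulVec, tmh_dot_transpose]
  set f : Fin n → ℝ := F *ᵥ u with hf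
  set δ : Fin n → ℝ := xk - f with hδ
  have hxk : xk = δ + f := by rw [hδ]; abel
  have hx1 : xk1 = A *ᵥ δ + f := by
    rw [hdyn]
    have hBu : B *ᵥ u = f - A *ᵥ f := by
      rw [← hSF, ← mulVec_mulVec, ← hf, sub_mulVec, one_mulVec]
    rw [hBu, hxk, mulVec_add]
    abel
  have hplant : xk1 ⬝ᵥ (P *ᵥ xk1) - xk ⬝ᵥ (P *ᵥ xk)
      - 2 * (u ⬝ᵥ (C *ᵥ xk1)) + 2 * (u ⬝ᵥ (C *ᵥ xk))
      = (A *ᵥ δ) ⬝ᵥ (P *ᵥ (A *ᵥ δ)) - δ ⬝ᵥ (P *ᵥ δ) := by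
    rw [hCdot, hCdot, ← hf, hx1, hxk]
    exact tmh_quad_expand P hPsymm (A *ᵥ δ) δ f
  have hM : (A *ᵥ δ) ⬝ᵥ (P *ᵥ (A *ᵥ δ)) - δ ⬝ᵥ (P *ᵥ δ) ≤ 0 := by
    have h := hPsemi δ
    rw [sub_mulVec, dotProduct_sub, ← mulVec_mulVec, ← mulVec_mulVec,
      tmh_dot_transpose] at h
    linarith
  have hsum : ∑ i, DDiss κ ξ u (C *ᵥ xk) i / κ i
      = 2 * (u ⬝ᵥ (C *ᵥ xk)) - 2 * (ξ ⬝ᵥ (C *ᵥ xk))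
        - (∑ i, (u i) ^ 2 / κ i) + ∑ i, (ξ i) ^ 2 / κ i := by
    have hterm : ∀ i : Fin p, DDiss κ ξ u (C *ᵥ xk) i / κ i
        = 2 * (u i * (C *ᵥ xk) i) - 2 * (ξ i * (C *ᵥ xk) i)
          - (u i) ^ 2 / κ i + (ξ i) ^ 2 / κ i := by
      intro i
      have := (hκ i).ne'
      unfold DDiss
      field_simp
      ring
    rw [Finset.sum_congr rfl fun i _ => hterm i]
    simp only [dotProduct, Finset.sum_add_distrib, Finset.sum_sub_distrib, ← Finset.mul_sum]
  simp only [WLyap]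
  linarith [hplant, hM, hsum]

end HelpersTMH

set_option maxHeartbeats 1600000 in
/-- Asymptotic stability of a minimal ZOH-NI linear plant in positive feedback
with a trimodal multi-HIGS with `0 < ω_i ≤ κ_i` and `K⁻¹ − G(1) > 0` (`K = diag(κ)`,
`G(1) = C(I−A)⁻¹B`): the origin is Lyapunov stable and every closed-loop trajectory
converges to the origin. -/
theorem trimodal_multiHIGS_closed_loop_asymptotically_stable
    {n p : ℕ} (A : Matrix (Fin n) (Fin n) ℝ) (B : Matrix (Fin n) (Fin p) ℝ)
    (C : Matrix (Fin p) (Fin n) ℝ)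
    (hdet : (1 - A).det ≠ 0)
    (hctrb : ∀ v : Fin n → ℝ, (∀ k : ℕ, Bᵀ *ᵥ ((Aᵀ) ^ k *ᵥ v) = 0) → v = 0)
    (hobs : ∀ v : Fin n → ℝ, (∀ k : ℕ, C *ᵥ (A ^ k *ᵥ v) = 0) → v = 0)
    (hNI : ∃ P : Matrix (Fin n) (Fin n) ℝ, P.IsSymm ∧ P.PosDef ∧
        (∀ v : Fin n → ℝ, v ⬝ᵥ ((Aᵀ * P * A - P) *ᵥ v) ≤ 0) ∧
        C = Bᵀ * ((1 - A)⁻¹)ᵀ * P)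
    (ω κ : Fin p → ℝ) (hω : ∀ i, 0 < ω i) (hωκ : ∀ i, ω i ≤ κ i)
    (hK : ∀ v : Fin p → ℝ, v ≠ 0 →
        0 < v ⬝ᵥ (((Matrix.diagonal κ)⁻¹ - C * (1 - A)⁻¹ * B) *ᵥ v)) :
    (∀ ε > (0 : ℝ), ∃ δ > (0 : ℝ),
        ∀ (x : ℕ → Fin n → ℝ) (Xt : ℕ → Fin p → ℝ),
          IsTrimodalClosedLoopTrajectory A B C ω κ x Xt →
          ‖x 0‖ < δ → ‖Xt 0‖ < δ → ∀ k : ℕ, ‖x k‖ < ε ∧ ‖Xt k‖ < ε)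
    ∧
    (∀ (x : ℕ → Fin n → ℝ) (Xt : ℕ → Fin p → ℝ),
        IsTrimodalClosedLoopTrajectory A B C ω κ x Xt →
        Tendsto x atTop (nhds 0) ∧ Tendsto Xt atTop (nhds 0)) := by
  classical
  obtain ⟨P, hPsymm', hPpd, hPsemi, hC⟩ := hNI
  have hPsymm : Pᵀ = P := hPsymm'
  have hκpos : ∀ i, 0 < κ i := fun i => lt_of_lt_of_le (hω i) (hωκ i)
  have hSdet : IsUnit (1 - A).det := isUnit_iff_ne_zero.mpr hdet
  have hSS : (1 - A) * (1 - A)⁻¹ = 1 := mul_nonsing_inv _ hSdet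
  have hS'S : (1 - A)⁻¹ * (1 - A) = 1 := nonsing_inv_mul _ hSdet
  set F : Matrix (Fin n) (Fin p) ℝ := (1 - A)⁻¹ * B with hF
  have hSF : (1 - A) * F = B := by rw [hF, ← Matrix.mul_assoc, hSS, Matrix.one_mul]
  have hCF : C = Fᵀ * P := by rw [hC, hF, transpose_mul]
  have hCdot : ∀ (v : Fin p → ℝ) (w : Fin n → ℝ),
      v ⬝ᵥ (C *ᵥ w) = (F *ᵥ v) ⬝ᵥ (P *ᵥ w) := by
    intro v w; rw [hCF, ← mulVec_mulVec, tmh_dot_transpose]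
  have hAFB : A * F + B = F := by
    have h2 : F - A * F = B := by rw [← hSF, Matrix.sub_mul, Matrix.one_mul]
    rw [← h2]; abel
  have hPD : ∀ v : Fin n → ℝ, v ≠ 0 → 0 < v ⬝ᵥ (P *ᵥ v) := fun v hv => by
    simpa using hPpd.dotProduct_mulVec_pos hv
  have hPSD : ∀ v : Fin n → ℝ, 0 ≤ v ⬝ᵥ (P *ᵥ v) := by
    intro v
    rcases eq_or_ne v 0 with rfl | hv
    · simp
    · exact le_of_lt (hPD v hv)
  -- diagonal inverse facts
  have hKinv : (Matrix.diagonal κ)⁻¹ = Matrix.diagonal (fun i => (κ i)⁻¹) := by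
    apply inv_eq_right_inv
    rw [diagonal_mul_diagonal]
    have : (fun i => κ i * (κ i)⁻¹) = fun _ => (1:ℝ) :=
      funext fun i => mul_inv_cancel₀ (hκpos i).ne'
    rw [this, Matrix.diagonal_one]
  have hKinvmul : ∀ v : Fin p → ℝ,
      (Matrix.diagonal κ)⁻¹ *ᵥ v = fun i => v i / κ i := by
    intro v
    funext i
    rw [hKinv, mulVec_diagonal]
    rw [div_eq_inv_mul]
  have hKinvdot : ∀ v : Fin p → ℝ,
      v ⬝ᵥ ((Matrix.diagonal κ)⁻¹ *ᵥ v) = ∑ i, (v i) ^ 2 / κ i := by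
    intro v
    rw [hKinvmul]
    simp only [dotProduct]
    refine Finset.sum_congr rfl fun i _ => ?_
    rw [pow_two]
    ring
  -- decomposition of W
  have hWdecomp : ∀ (xv : Fin n → ℝ) (ξ : Fin p → ℝ),
      WLyap P C κ xv ξ = (xv - F *ᵥ ξ) ⬝ᵥ (P *ᵥ (xv - F *ᵥ ξ))
        + ξ ⬝ᵥ (((Matrix.diagonal κ)⁻¹ - C * (1 - A)⁻¹ * B) *ᵥ ξ) := by
    intro xv ξ
    have e1 : ξ ⬝ᵥ (C *ᵥ xv) = (F *ᵥ ξ) ⬝ᵥ (P *ᵥ xv) := hCdot ξ xv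
    have e2 : ξ ⬝ᵥ ((C * (1 - A)⁻¹ * B) *ᵥ ξ) = (F *ᵥ ξ) ⬝ᵥ (P *ᵥ (F *ᵥ ξ)) := by
      rw [Matrix.mul_assoc, ← hF, ← mulVec_mulVec, hCdot]
    have e3 := tmh_dot_symm P hPsymm xv (F *ᵥ ξ)
    simp only [WLyap, sub_mulVec, dotProduct_sub, sub_dotProduct, mulVec_sub]
    rw [hKinvdot]
    linarith [e1, e2, e3]
  -- positivity of W on nonzero states
  have hWpos : ∀ q : (Fin n → ℝ) × (Fin p → ℝ), q ≠ 0 → 0 < WLyap P C κ q.1 q.2 := by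
    rintro ⟨xv, ξ⟩ hq
    rw [hWdecomp]
    rcases eq_or_ne ξ 0 with rfl | hξ
    · have hxv : xv ≠ 0 := by
        intro h; exact hq (by simp [h, Prod.ext_iff])
      simpa using hPD xv hxv
    · have h1 : 0 ≤ (xv - F *ᵥ ξ) ⬝ᵥ (P *ᵥ (xv - F *ᵥ ξ)) := hPSD _
      have h2 := hK ξ hξ
      linarith
  -- continuity and homogeneity on the product space
  have hgcont : Continuous fun q : (Fin n → ℝ) × (Fin p → ℝ) => WLyap P C κ q.1 q.2 := by
    simp only [WLyap]
    refine ((tmh_dotProduct_continuous _ _ continuous_fst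
      ((tmh_mulVec_continuous P).comp continuous_fst)).sub
      (continuous_const.mul (tmh_dotProduct_continuous _ _ continuous_snd
        ((tmh_mulVec_continuous C).comp continuous_fst)))).add ?_
    exact continuous_finset_sum _ fun i _ => by
      fun_prop
  have hghom : ∀ (t : ℝ) (q : (Fin n → ℝ) × (Fin p → ℝ)),
      WLyap P C κ (t • q).1 (t • q).2 = t ^ 2 * WLyap P C κ q.1 q.2 := by
    intro t q
    have hsum : ∑ i, (t * q.2 i) ^ 2 / κ i = t ^ 2 * ∑ i, (q.2 i) ^ 2 / κ i := by
      rw [Finset.mul_sum]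
      exact Finset.sum_congr rfl fun i _ => by ring
    simp only [WLyap, Prod.smul_fst, Prod.smul_snd, mulVec_smul, dotProduct_smul,
      smul_dotProduct, smul_eq_mul, Pi.smul_apply]
    rw [hsum]
    ring
  obtain ⟨c, hc, Cb, hCb, hbounds⟩ := tmh_quad_bounds
    (fun q : (Fin n → ℝ) × (Fin p → ℝ) => WLyap P C κ q.1 q.2) hgcont hghom hWpos
  -- per-step facts for a trajectory
  have hstep : ∀ (x : ℕ → Fin n → ℝ) (Xt : ℕ → Fin p → ℝ),
      IsTrimodalClosedLoopTrajectory A B C ω κ x Xt → ∀ k,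
      WLyap P C κ (x (k+1)) (Xt (k+1)) - WLyap P C κ (x k) (Xt k)
        + ∑ i, DDiss κ (Xt k) (Xt (k+1)) (C *ᵥ x k) i / κ i ≤ 0 := by
    intro x Xt htraj k
    exact tmh_step_lemma A B C P F hPsymm hSF hCF hPsemi κ hκpos
      (x k) (x (k+1)) (Xt k) (Xt (k+1)) (htraj k).2
  have hDfacts : ∀ (x : ℕ → Fin n → ℝ) (Xt : ℕ → Fin p → ℝ),
      IsTrimodalClosedLoopTrajectory A B C ω κ x Xt → ∀ k i,
      (Xt (k+1) i - Xt k i) ^ 2 ≤ DDiss κ (Xt k) (Xt (k+1)) (C *ᵥ x k) i ∧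
      0 ≤ Xt (k+1) i * (κ i * (C *ᵥ x k) i - Xt (k+1) i) ∧
      (Xt (k+1) i = κ i * (C *ᵥ x k) i ∨
        (ω i) ^ 2 * ((C *ᵥ x k) i) ^ 2 ≤ DDiss κ (Xt k) (Xt (k+1)) (C *ᵥ x k) i) := by
    intro x Xt htraj k i
    have hupd := (htraj k).1 i
    obtain ⟨hA1, hA2, hA3⟩ := tmh_higs_key (ω i) (κ i) (Xt k i) ((C *ᵥ x k) i) (hω i) (hωκ i)
    rw [← hupd] at hA1 hA2 hA3
    refine ⟨?_, hA2, ?_⟩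
    · simp only [DDiss]; nlinarith [hA1]
    · rcases hA3 with h | h
      · exact Or.inl h
      · exact Or.inr (by simp only [DDiss]; linarith [h])
  have hDnn : ∀ (x : ℕ → Fin n → ℝ) (Xt : ℕ → Fin p → ℝ),
      IsTrimodalClosedLoopTrajectory A B C ω κ x Xt → ∀ k i,
      0 ≤ DDiss κ (Xt k) (Xt (k+1)) (C *ᵥ x k) i := by
    intro x Xt htraj k i
    exact le_trans (sq_nonneg _) (hDfacts x Xt htraj k i).1
  have hWmono : ∀ (x : ℕ → Fin n → ℝ) (Xt : ℕ → Fin p → ℝ),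
      IsTrimodalClosedLoopTrajectory A B C ω κ x Xt → ∀ k,
      WLyap P C κ (x (k+1)) (Xt (k+1)) ≤ WLyap P C κ (x k) (Xt k) := by
    intro x Xt htraj k
    have h1 := hstep x Xt htraj k
    have h2 : 0 ≤ ∑ i, DDiss κ (Xt k) (Xt (k+1)) (C *ᵥ x k) i / κ i :=
      Finset.sum_nonneg fun i _ => div_nonneg (hDnn x Xt htraj k i) (hκpos i).le
    linarith
  have hWanti : ∀ (x : ℕ → Fin n → ℝ) (Xt : ℕ → Fin p → ℝ),
      IsTrimodalClosedLoopTrajectory A B C ω κ x Xt → ∀ k,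
      WLyap P C κ (x k) (Xt k) ≤ WLyap P C κ (x 0) (Xt 0) := by
    intro x Xt htraj k
    induction k with
    | zero => exact le_rfl
    | succ k ih => exact le_trans (hWmono x Xt htraj k) ih
  constructor
  · -- Lyapunov stability
    intro ε hε
    have hrt : (0:ℝ) < Real.sqrt (c / (2 * Cb)) := Real.sqrt_pos.mpr (by positivity)
    refine ⟨min ε (ε * Real.sqrt (c / (2 * Cb))), lt_min hε (by positivity), ?_⟩
    intro x Xt htraj hx0 hXt0 k
    set q : ℕ → (Fin n → ℝ) × (Fin p → ℝ) := fun k => (x k, Xt k) with hq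
    have hq0 : ‖q 0‖ < ε * Real.sqrt (c / (2 * Cb)) := by
      have h1 : ‖x 0‖ < ε * Real.sqrt (c / (2 * Cb)) :=
        lt_of_lt_of_le hx0 (min_le_right _ _)
      have h2 : ‖Xt 0‖ < ε * Real.sqrt (c / (2 * Cb)) :=
        lt_of_lt_of_le hXt0 (min_le_right _ _)
      rw [Prod.norm_def]
      exact max_lt h1 h2
    have hWk : WLyap P C κ (x k) (Xt k) ≤ WLyap P C κ (x 0) (Xt 0) := hWanti x Xt htraj k
    have hlb := (hbounds (q k)).1
    have hub := (hbounds (q 0)).2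
    have hq0sq : ‖q 0‖ ^ 2 < (ε * Real.sqrt (c / (2 * Cb))) ^ 2 := by
      apply pow_lt_pow_left₀ hq0 (norm_nonneg _)
      norm_num
    have hsqrt_sq : (Real.sqrt (c / (2 * Cb))) ^ 2 = c / (2 * Cb) :=
      Real.sq_sqrt (by positivity)
    have hqk : c * ‖q k‖ ^ 2 < c * ε ^ 2 / 2 := by
      have : Cb * ‖q 0‖ ^ 2 < Cb * (ε ^ 2 * (c / (2 * Cb))) := by
        have := mul_lt_mul_of_pos_left hq0sq hCb
        calc Cb * ‖q 0‖ ^ 2 < Cb * (ε * Real.sqrt (c / (2*Cb))) ^ 2 := this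
        _ = Cb * (ε ^ 2 * (c / (2 * Cb))) := by rw [mul_pow, hsqrt_sq]
      have hCbne : (Cb:ℝ) ≠ 0 := ne_of_gt hCb
      have heq : Cb * (ε ^ 2 * (c / (2 * Cb))) = c * ε ^ 2 / 2 := by
        field_simp
      calc c * ‖q k‖ ^ 2 ≤ WLyap P C κ (x k) (Xt k) := hlb
      _ ≤ WLyap P C κ (x 0) (Xt 0) := hWk
      _ ≤ Cb * ‖q 0‖ ^ 2 := hub
      _ < Cb * (ε ^ 2 * (c / (2 * Cb))) := this
      _ = c * ε ^ 2 / 2 := heq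
    have hsq : ‖q k‖ ^ 2 < ε ^ 2 := by
      nlinarith [hqk, mul_pos hc (pow_pos hε 2)]
    have hqknorm : ‖q k‖ < ε := by
      nlinarith [hsq, norm_nonneg (q k), hε]
    constructor
    · exact lt_of_le_of_lt (norm_fst_le (q k)) hqknorm
    · exact lt_of_le_of_lt (norm_snd_le (q k)) hqknorm
  · -- convergence
    intro x Xt htraj
    set q : ℕ → (Fin n → ℝ) × (Fin p → ℝ) := fun k => (x k, Xt k) with hqdef
    have hdyn : ∀ k, x (k+1) = A *ᵥ x k + B *ᵥ Xt (k+1) := fun k => (htraj k).2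
    -- summability of the dissipation terms
    have hsnn : ∀ k, 0 ≤ ∑ i, DDiss κ (Xt k) (Xt (k+1)) (C *ᵥ x k) i / κ i :=
      fun k => Finset.sum_nonneg fun i _ => div_nonneg (hDnn x Xt htraj k i) (hκpos i).le
    have hpartial : ∀ N, ∑ k ∈ Finset.range N,
        (∑ i, DDiss κ (Xt k) (Xt (k+1)) (C *ᵥ x k) i / κ i) ≤ WLyap P C κ (x 0) (Xt 0) := by
      intro N
      have htel : ∑ k ∈ Finset.range N,
          (WLyap P C κ (x k) (Xt k) - WLyap P C κ (x (k+1)) (Xt (k+1)))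
          = WLyap P C κ (x 0) (Xt 0) - WLyap P C κ (x N) (Xt N) :=
        Finset.sum_range_sub' (fun k => WLyap P C κ (x k) (Xt k)) N
      have hle : ∑ k ∈ Finset.range N, (∑ i, DDiss κ (Xt k) (Xt (k+1)) (C *ᵥ x k) i / κ i)
          ≤ ∑ k ∈ Finset.range N,
            (WLyap P C κ (x k) (Xt k) - WLyap P C κ (x (k+1)) (Xt (k+1))) :=
        Finset.sum_le_sum fun k _ => by linarith [hstep x Xt htraj k]
      have hWN : 0 ≤ WLyap P C κ (x N) (Xt N) :=
        le_trans (by positivity) ((hbounds (q N)).1)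
      rw [htel] at hle
      linarith
    have hsummable : Summable (fun k => ∑ i, DDiss κ (Xt k) (Xt (k+1)) (C *ᵥ x k) i / κ i) :=
      summable_of_sum_range_le hsnn hpartial
    have hsto := hsummable.tendsto_atTop_zero
    have hDto : ∀ i, Tendsto (fun k => DDiss κ (Xt k) (Xt (k+1)) (C *ᵥ x k) i) atTop (𝓝 0) := by
      intro i
      have hdivto : Tendsto (fun k => DDiss κ (Xt k) (Xt (k+1)) (C *ᵥ x k) i / κ i)
          atTop (𝓝 0) := by
        refine tendsto_of_tendsto_of_tendsto_of_le_of_le tendsto_const_nhds hsto ?_ ?_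
        · exact fun k => div_nonneg (hDnn x Xt htraj k i) (hκpos i).le
        · exact fun k => Finset.single_le_sum
            (fun j (_ : j ∈ Finset.univ) => div_nonneg (hDnn x Xt htraj k j) (hκpos j).le)
            (Finset.mem_univ i)
      have h2 := hdivto.const_mul (κ i)
      rw [mul_zero] at h2
      refine h2.congr fun k => ?_
      rw [mul_comm, div_mul_cancel₀ _ (hκpos i).ne']
    have hdiff0 : Tendsto (fun k => Xt (k+1) - Xt k) atTop (𝓝 0) := by
      rw [tendsto_pi_nhds]
      intro i
      have hsq : Tendsto (fun k => (Xt (k+1) i - Xt k i) ^ 2) atTop (𝓝 0) :=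
        tendsto_of_tendsto_of_tendsto_of_le_of_le tendsto_const_nhds (hDto i)
          (fun k => sq_nonneg _) (fun k => (hDfacts x Xt htraj k i).1)
      have habs : Tendsto (fun k => |Xt (k+1) i - Xt k i|) atTop (𝓝 0) := by
        have h3 := (Real.continuous_sqrt.tendsto 0).comp hsq
        simp only [Function.comp_def, Real.sqrt_sq_eq_abs, Real.sqrt_zero] at h3
        exact h3
      have hneg := habs.neg
      rw [neg_zero] at hneg
      have hfin : Tendsto (fun k => Xt (k+1) i - Xt k i) atTop (𝓝 0) :=
        tendsto_of_tendsto_of_tendsto_of_le_of_le hneg habs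
          (fun k => neg_abs_le _) (fun k => le_abs_self _)
      simpa using hfin
    -- uniform bound on the state
    set W0 := WLyap P C κ (x 0) (Xt 0) with hW0def
    set Rq := Real.sqrt (W0 / c) with hRqdef
    have hqbound : ∀ k, ‖q k‖ ≤ Rq := by
      intro k
      have h1 : c * ‖q k‖ ^ 2 ≤ W0 := le_trans (hbounds (q k)).1 (hWanti x Xt htraj k)
      have h2 : ‖q k‖ ^ 2 ≤ W0 / c := (le_div_iff₀' hc).mpr h1
      calc ‖q k‖ = Real.sqrt (‖q k‖ ^ 2) := (Real.sqrt_sq (norm_nonneg _)).symm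
      _ ≤ Rq := Real.sqrt_le_sqrt h2
    -- every limit point along a subsequence is the origin
    have hcore : ∀ ks : ℕ → ℕ, Tendsto ks atTop atTop → ∀ (xs : Fin n → ℝ) (ξs : Fin p → ℝ),
        Tendsto (fun j => x (ks j)) atTop (𝓝 xs) →
        Tendsto (fun j => Xt (ks j)) atTop (𝓝 ξs) → xs = 0 ∧ ξs = 0 := by
      intro ks hks xs ξs hxs hξs
      have hks' : ∀ m : ℕ, Tendsto (fun j => ks j + m) atTop atTop :=
        fun m => (tendsto_add_atTop_nat m).comp hks
      have hXim : ∀ m, Tendsto (fun j => Xt (ks j + m)) atTop (𝓝 ξs) := by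
        intro m
        induction m with
        | zero => simpa using hξs
        | succ m ih =>
          have h1 : Tendsto (fun j => Xt (ks j + m + 1) - Xt (ks j + m)) atTop (𝓝 0) :=
            hdiff0.comp (hks' m)
          have h2 := h1.add ih
          rw [zero_add] at h2
          refine h2.congr fun j => ?_
          abel
      set d0 : Fin n → ℝ := xs - F *ᵥ ξs with hd0def
      set z : ℕ → Fin n → ℝ := fun m => A ^ m *ᵥ d0 + F *ᵥ ξs with hzdef
      have hz0 : z 0 = xs := by
        show A ^ 0 *ᵥ d0 + F *ᵥ ξs = xs
        rw [pow_zero, Matrix.one_mulVec, hd0def]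
        abel
      have hzrec : ∀ m, z (m+1) = A *ᵥ z m + B *ᵥ ξs := by
        intro m
        show A ^ (m+1) *ᵥ d0 + F *ᵥ ξs = A *ᵥ (A ^ m *ᵥ d0 + F *ᵥ ξs) + B *ᵥ ξs
        conv_rhs => rw [mulVec_add, mulVec_mulVec, ← pow_succ', mulVec_mulVec,
          add_assoc, ← add_mulVec, hAFB]
      have hzm : ∀ m, Tendsto (fun j => x (ks j + m)) atTop (𝓝 (z m)) := by
        intro m
        induction m with
        | zero =>
          rw [hz0]
          simpa using hxs
        | succ m ih =>
          have h1 : Tendsto (fun j => A *ᵥ x (ks j + m)) atTop (𝓝 (A *ᵥ z m)) :=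
            ((tmh_mulVec_continuous A).tendsto (z m)).comp ih
          have h2 : Tendsto (fun j => B *ᵥ Xt (ks j + m + 1)) atTop (𝓝 (B *ᵥ ξs)) :=
            ((tmh_mulVec_continuous B).tendsto ξs).comp (hXim (m+1))
          have h3 := h1.add h2
          rw [← hzrec m] at h3
          exact h3.congr fun j => (hdyn (ks j + m)).symm
      have hzbound : ∀ m, ‖z m‖ ≤ Rq := by
        intro m
        refine le_of_tendsto (hzm m).norm (Eventually.of_forall fun j => ?_)
        exact le_trans (norm_fst_le (q (ks j + m))) (hqbound _)
      have hEmi : ∀ m i, Tendsto (fun j => (C *ᵥ x (ks j + m)) i) atTop (𝓝 ((C *ᵥ z m) i)) :=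
        fun m i => ((continuous_apply i).tendsto (C *ᵥ z m)).comp
          (((tmh_mulVec_continuous C).tendsto (z m)).comp (hzm m))
      have hXmi : ∀ m i, Tendsto (fun j => Xt (ks j + m) i) atTop (𝓝 (ξs i)) :=
        fun m i => ((continuous_apply i).tendsto ξs).comp (hXim m)
      have hseclim : ∀ m i, 0 ≤ ξs i * (κ i * (C *ᵥ z m) i - ξs i) := by
        intro m i
        have hfn : Tendsto (fun j => Xt (ks j + m + 1) i *
            (κ i * (C *ᵥ x (ks j + m)) i - Xt (ks j + m + 1) i)) atTop
            (𝓝 (ξs i * (κ i * (C *ᵥ z m) i - ξs i))) :=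
          (hXmi (m+1) i).mul ((tendsto_const_nhds.mul (hEmi m i)).sub (hXmi (m+1) i))
        exact ge_of_tendsto hfn
          (Eventually.of_forall fun j => (hDfacts x Xt htraj (ks j + m) i).2.1)
      have hEeq : ∀ m, C *ᵥ z m = fun i => ξs i / κ i := by
        intro m
        funext i
        by_cases hfr : ∃ᶠ j in atTop, Xt (ks j + m + 1) i = κ i * ((C *ᵥ x (ks j + m)) i)
        · obtain ⟨φ, hφm, hφp⟩ := extraction_of_frequently_atTop hfr
          have h1 : Tendsto (fun t => Xt (ks (φ t) + m + 1) i) atTop (𝓝 (ξs i)) :=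
            (hXmi (m+1) i).comp hφm.tendsto_atTop
          have h2 : Tendsto (fun t => κ i * (C *ᵥ x (ks (φ t) + m)) i) atTop
              (𝓝 (κ i * (C *ᵥ z m) i)) :=
            tendsto_const_nhds.mul ((hEmi m i).comp hφm.tendsto_atTop)
          have heq : ξs i = κ i * (C *ᵥ z m) i :=
            tendsto_nhds_unique (h1.congr fun t => hφp t) h2
          rw [heq, mul_comm, mul_div_assoc, div_self (hκpos i).ne', mul_one]
        · rw [not_frequently] at hfr
          have hev : ∀ᶠ j in atTop, (ω i) ^ 2 * ((C *ᵥ x (ks j + m)) i) ^ 2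
              ≤ DDiss κ (Xt (ks j + m)) (Xt (ks j + m + 1)) (C *ᵥ x (ks j + m)) i := by
            filter_upwards [hfr] with j hj
            rcases (hDfacts x Xt htraj (ks j + m) i).2.2 with h | h
            · exact absurd h hj
            · exact h
          have hDkto : Tendsto (fun j =>
              DDiss κ (Xt (ks j + m)) (Xt (ks j + m + 1)) (C *ᵥ x (ks j + m)) i)
              atTop (𝓝 0) := (hDto i).comp (hks' m)
          have hsqz : Tendsto (fun j => (ω i) ^ 2 * ((C *ᵥ x (ks j + m)) i) ^ 2)
              atTop (𝓝 0) :=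
            tendsto_of_tendsto_of_tendsto_of_le_of_le' tendsto_const_nhds hDkto
              (Eventually.of_forall fun j => by positivity) hev
          have hlim2 : Tendsto (fun j => (ω i) ^ 2 * ((C *ᵥ x (ks j + m)) i) ^ 2)
              atTop (𝓝 ((ω i) ^ 2 * ((C *ᵥ z m) i) ^ 2)) :=
            tendsto_const_nhds.mul ((hEmi m i).pow 2)
          have h0 : (ω i) ^ 2 * ((C *ᵥ z m) i) ^ 2 = 0 := tendsto_nhds_unique hlim2 hsqz
          have hE0 : (C *ᵥ z m) i = 0 := by
            rcases mul_eq_zero.mp h0 with h | h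
            · exact absurd h (pow_ne_zero 2 (hω i).ne')
            · exact pow_eq_zero_iff (two_ne_zero) |>.mp h
          have hξ0 : ξs i = 0 := by
            have hs := hseclim m i
            rw [hE0] at hs
            nlinarith [hs, sq_nonneg (ξs i)]
          rw [hE0, hξ0, zero_div]
      have hCzm : ∀ m, C *ᵥ (A ^ m *ᵥ d0)
          = (fun i => ξs i / κ i) - (C * (1 - A)⁻¹ * B) *ᵥ ξs := by
        intro m
        have h1 : C *ᵥ z m = C *ᵥ (A ^ m *ᵥ d0) + (C * (1 - A)⁻¹ * B) *ᵥ ξs := by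
          show C *ᵥ ((fun m => A ^ m *ᵥ d0 + F *ᵥ ξs) m) = _
          rw [mulVec_add]
          congr 1
          rw [mulVec_mulVec, hF, ← Matrix.mul_assoc]
        rw [hEeq m] at h1
        exact eq_sub_of_add_eq h1.symm
      set w : Fin p → ℝ := (fun i => ξs i / κ i) - (C * (1 - A)⁻¹ * B) *ᵥ ξs with hwdef
      have hgeom : ∀ N : ℕ, (∑ m ∈ Finset.range N, A ^ m) = (1 - A)⁻¹ * (1 - A ^ N) := by
        intro N
        have h1 := mul_geom_sum A N
        have h2 : (1 - A) * (∑ m ∈ Finset.range N, A ^ m) = 1 - A ^ N := by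
          have hneg : (1 - A) = -(A - 1) := (neg_sub A 1).symm
          rw [hneg, neg_mul, h1, neg_sub]
        calc (∑ m ∈ Finset.range N, A ^ m) = 1 * (∑ m ∈ Finset.range N, A ^ m) :=
          (one_mul _).symm
        _ = ((1 - A)⁻¹ * (1 - A)) * (∑ m ∈ Finset.range N, A ^ m) := by rw [hS'S]
        _ = (1 - A)⁻¹ * (1 - A ^ N) := by rw [mul_assoc, h2]
      have hNw : ∀ N : ℕ, (N : ℝ) • w = (C * (1 - A)⁻¹) *ᵥ (d0 - A ^ N *ᵥ d0) := by
        intro N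
        have hsum1 : ∑ m ∈ Finset.range N, (C *ᵥ (A ^ m *ᵥ d0)) = (N : ℝ) • w := by
          rw [Finset.sum_congr rfl fun m _ => hCzm m, Finset.sum_const, Finset.card_range,
            ← Nat.cast_smul_eq_nsmul ℝ]
        have e2 : C *ᵥ (∑ m ∈ Finset.range N, (A ^ m *ᵥ d0))
            = ∑ m ∈ Finset.range N, C *ᵥ (A ^ m *ᵥ d0) := by
          induction (Finset.range N) using Finset.cons_induction with
          | empty => simp [Matrix.mulVec_zero]
          | cons a s ha ih => rw [Finset.sum_cons, Finset.sum_cons, Matrix.mulVec_add, ih]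
        have e1 : (∑ m ∈ Finset.range N, A ^ m) *ᵥ d0
            = ∑ m ∈ Finset.range N, (A ^ m *ᵥ d0) := by
          induction (Finset.range N) using Finset.cons_induction with
          | empty => simp [Matrix.zero_mulVec]
          | cons a s ha ih => rw [Finset.sum_cons, Finset.sum_cons, Matrix.add_mulVec, ih]
        calc (N : ℝ) • w = ∑ m ∈ Finset.range N, (C *ᵥ (A ^ m *ᵥ d0)) := hsum1.symm
        _ = C *ᵥ ((∑ m ∈ Finset.range N, A ^ m) *ᵥ d0) := by rw [e1, e2]
        _ = (C * (1 - A)⁻¹) *ᵥ (d0 - A ^ N *ᵥ d0) := by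
            rw [hgeom N, ← mulVec_mulVec, mulVec_mulVec, sub_mulVec, Matrix.one_mulVec]
      obtain ⟨L, hL0, hLb⟩ := tmh_mulVec_bound (C * (1 - A)⁻¹)
      have hANb : ∀ N : ℕ, ‖d0 - A ^ N *ᵥ d0‖ ≤ ‖d0‖ + (Rq + ‖F *ᵥ ξs‖) := by
        intro N
        have h1 : A ^ N *ᵥ d0 = z N - F *ᵥ ξs := by
          show A ^ N *ᵥ d0 = (fun m => A ^ m *ᵥ d0 + F *ᵥ ξs) N - F *ᵥ ξs
          simp
        calc ‖d0 - A ^ N *ᵥ d0‖ ≤ ‖d0‖ + ‖A ^ N *ᵥ d0‖ := norm_sub_le _ _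
        _ ≤ ‖d0‖ + (‖z N‖ + ‖F *ᵥ ξs‖) := by
            rw [h1]
            exact add_le_add le_rfl (norm_sub_le _ _)
        _ ≤ ‖d0‖ + (Rq + ‖F *ᵥ ξs‖) := by
            have := hzbound N
            gcongr
      have hw0 : w = 0 := by
        by_contra hwne
        have hnw : 0 < ‖w‖ := norm_pos_iff.mpr hwne
        obtain ⟨N, hN⟩ := exists_nat_gt ((L * (‖d0‖ + (Rq + ‖F *ᵥ ξs‖))) / ‖w‖)
        have hb : (N : ℝ) * ‖w‖ ≤ L * (‖d0‖ + (Rq + ‖F *ᵥ ξs‖)) := by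
          have h1 : ‖(N : ℝ) • w‖ = (N : ℝ) * ‖w‖ := by
            rw [norm_smul, Real.norm_natCast]
          rw [← h1, hNw N]
          exact le_trans (hLb _) (mul_le_mul_of_nonneg_left (hANb N) hL0)
        rw [div_lt_iff₀ hnw] at hN
        linarith
      have hξs0 : ξs = 0 := by
        by_contra hne
        have hpos := hK ξs hne
        have hmv : ((Matrix.diagonal κ)⁻¹ - C * (1 - A)⁻¹ * B) *ᵥ ξs = w := by
          rw [sub_mulVec, hKinvmul, hwdef]
        rw [hmv, hw0] at hpos
        simp at hpos
      have hd00 : d0 = 0 := by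
        apply hobs
        intro m
        have h := hCzm m
        rw [hw0] at h
        exact h
      refine ⟨?_, hξs0⟩
      have hxs : xs = d0 + F *ᵥ ξs := by rw [hd0def]; abel
      rw [hxs, hd00, hξs0]
      simp
    -- assemble convergence from compactness
    have hqlim : Tendsto q atTop (𝓝 0) := by
      apply tendsto_of_subseq_tendsto
      intro ns hns
      have hball : ∀ j, q (ns j) ∈ Metric.closedBall (0 : (Fin n → ℝ) × (Fin p → ℝ)) Rq := by
        intro j
        rw [Metric.mem_closedBall, dist_zero_right]
        exact hqbound (ns j)
      obtain ⟨a, _, φ, hφ, hlim⟩ :=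
        (isCompact_closedBall (0 : (Fin n → ℝ) × (Fin p → ℝ)) Rq).tendsto_subseq hball
      have hks : Tendsto (fun j => ns (φ j)) atTop atTop := hns.comp hφ.tendsto_atTop
      have hxlim : Tendsto (fun j => x (ns (φ j))) atTop (𝓝 a.1) :=
        (continuous_fst.tendsto a).comp hlim
      have hXtlim : Tendsto (fun j => Xt (ns (φ j))) atTop (𝓝 a.2) :=
        (continuous_snd.tendsto a).comp hlim
      obtain ⟨h1, h2⟩ := hcore (fun j => ns (φ j)) hks a.1 a.2 hxlim hXtlim
      refine ⟨φ, ?_⟩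
      have ha : a = 0 := Prod.ext_iff.mpr ⟨h1, h2⟩
      rw [ha] at hlim
      exact hlim
    constructor
    · have h := (continuous_fst.tendsto (0 : (Fin n → ℝ) × (Fin p → ℝ))).comp hqlim
      exact h
    · have h := (continuous_snd.tendsto (0 : (Fin n → ℝ) × (Fin p → ℝ))).comp hqlim
      exact h
end
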